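/- Let β > 0, ν > 0, ε > 0, t₀ ≥ 0, and let X = (X_n)_{n≥1} be a weak solution of the viscous dyadic model on [t₀,∞) with X_n(t) ≥ 0 for all n and t, such that sup_{n≥1} (λ_n^{β-2+ε} X_n(t₀)) < ∞. Then there exists t₀' > t₀ such that X is smooth on (t₀, t₀'], i.e. for every γ > 0 and every t ∈ (t₀, t₀'], sup_{n≥1} (λ_n^γ X_n(t)) < ∞. -/

import Mathlib

/-!
On a nonnegative solution the transfer term `-λ_n^β X_n X_{n+1}` only drains mode `n`, so
`X_n' ≤ -ν λ_n² X_n + λ_{n-1}^β X_{n-1}²`, and Grönwall's inequality turns a bound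
`X_{n-1} ≤ K λ_{n-1}^{-a}` into a bound on `X_n`, mode by mode. For a short time this keeps the
decay rate `a = β - 2 + ε` of the data: low modes have had no time to grow, and on high modes
the source `K² λ_n^{β-2a}` is beaten by the viscous rate `ν λ_n²`. Afterwards, on any time
interval of length `η`, the damping `exp (-ν λ_n² η) ≤ (ν λ_n² η)⁻¹` improves the rate by
`min ε 2`, and finitely many improvements reach any `γ`.
-/

/-- The dyadic frequencies: `λ_0 = 0`, `λ_n = 2^n` for `n ≥ 1`. -/
noncomputable def lam (n : ℕ) : ℝ := if n = 0 then 0 else 2 ^ n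

/-- `X` is a weak solution of the viscous dyadic model with parameter `β` and
viscosity `ν` on the interval `I`. -/
def IsViscousSolution (β ν : ℝ) (I : Set ℝ) (X : ℕ → ℝ → ℝ) : Prop :=
  ∀ n, 1 ≤ n → ∀ t ∈ I, HasDerivWithinAt (X n)
    (-ν * lam n ^ 2 * X n t + lam (n - 1) ^ β * (X (n - 1) t) ^ 2
      - lam n ^ β * X n t * X (n + 1) t) I t

open Real Set Filter

lemma lam_zero : lam 0 = 0 := if_pos rfl

lemma lam_of_ne_zero {n : ℕ} (hn : n ≠ 0) : lam n = 2 ^ n := if_neg hn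

lemma one_le_lam {n : ℕ} (hn : 1 ≤ n) : 1 ≤ lam n := by
  rw [lam_of_ne_zero (by omega)]
  exact one_le_pow₀ one_le_two

lemma lam_pos {n : ℕ} (hn : 1 ≤ n) : 0 < lam n := zero_lt_one.trans_le (one_le_lam hn)

lemma lam_succ {n : ℕ} (hn : 1 ≤ n) : lam (n + 1) = 2 * lam n := by
  rw [lam_of_ne_zero (by omega), lam_of_ne_zero (by omega), pow_succ, mul_comm]

lemma le_mul_lam_rpow_neg_iff {n : ℕ} (hn : 1 ≤ n) {a C x : ℝ} :
    x ≤ C * lam n ^ (-a) ↔ lam n ^ a * x ≤ C := by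
  rw [rpow_neg (lam_pos hn).le, ← div_eq_mul_inv, le_div_iff₀ (rpow_pos_of_pos (lam_pos hn) a),
    mul_comm]

lemma le_mul_lam_rpow_neg_of_le {n : ℕ} (hn : 1 ≤ n) {a b K x : ℝ} (hx : 0 ≤ x)
    (h : x ≤ K * lam n ^ (-a)) (hba : b ≤ a) : x ≤ K * lam n ^ (-b) := by
  have hK : 0 ≤ K := nonneg_of_mul_nonneg_left (hx.trans h) (rpow_pos_of_pos (lam_pos hn) _)
  exact h.trans (by gcongr; exact one_le_lam hn)

lemma gronwallBound_neg_le_mul_exp_add_div {δ c ε x : ℝ} (hc : 0 < c) (hε : 0 ≤ ε) :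
    gronwallBound δ (-c) ε x ≤ δ * exp (-c * x) + ε / c := by
  rw [gronwallBound, if_neg (neg_ne_zero.2 hc.ne'), div_neg]
  have : 0 ≤ ε / c := div_nonneg hε hc.le
  nlinarith [exp_pos (-c * x)]

lemma gronwallBound_neg_le_add_mul {δ c ε x : ℝ} (hc : 0 < c) (hδ : 0 ≤ δ) (hε : 0 ≤ ε)
    (hx : 0 ≤ x) : gronwallBound δ (-c) ε x ≤ δ + ε * x := by
  rw [gronwallBound, if_neg (neg_ne_zero.2 hc.ne')]
  have hexp : exp (-c * x) ≤ 1 := exp_le_one_iff.2 (by nlinarith)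
  have hsource : ε / -c * (exp (-c * x) - 1) ≤ ε * x :=
    calc ε / -c * (exp (-c * x) - 1) = ε / c * (1 - exp (-c * x)) := by ring
      _ ≤ ε / c * (c * x) := by gcongr; linarith [add_one_le_exp (-c * x)]
      _ = ε * x := by field_simp
  nlinarith

theorem le_gronwallBound_of_hasDerivWithinAt {f f' : ℝ → ℝ} {a b δ K ε : ℝ} (hab : a ≤ b)
    (hf : ∀ x ∈ Icc a b, HasDerivWithinAt f (f' x) (Ici a) x) (ha : f a ≤ δ)
    (bound : ∀ x ∈ Ico a b, f' x ≤ K * f x + ε) : f b ≤ gronwallBound δ K ε (b - a) := by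
  refine le_gronwallBound_of_liminf_deriv_right_le (fun x hx => ?_) (fun x hx r hr => ?_) ha
    bound b ⟨hab, le_rfl⟩
  · exact (hf x hx).continuousWithinAt.mono fun y hy => hy.1
  · exact ((hf x (Ico_subset_Icc_self hx)).mono (Ici_subset_Ici.2 hx.1)).liminf_right_slope_le hr

lemma exists_pos_min_mul_rpow_neg_le_one {M ν ε : ℝ} (hM : 0 ≤ M) (hε : 0 < ε) :
    ∃ δ > 0, ∀ τ ∈ Icc 0 δ, ∀ Λ : ℝ, 1 ≤ Λ →
      min (M * Λ ^ (-ε) * Λ ^ 2 * τ) (M * Λ ^ (-ε) / ν) ≤ 1 := by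
  obtain ⟨L, hL⟩ := eventually_atTop.1 <|
    (((tendsto_rpow_neg_atTop hε).const_mul M).div_const ν).eventually_le_const
      (by simpa using zero_lt_one)
  refine ⟨1 / (M * max L 1 ^ 2 + 1), by positivity, fun τ hτ Λ hΛ => ?_⟩
  rcases le_or_gt L Λ with hLΛ | hΛL
  · exact min_le_of_right_le (hL Λ hLΛ)
  · refine min_le_of_left_le ?_
    have h1 : Λ ^ (-ε) ≤ 1 := rpow_le_one_of_one_le_of_nonpos hΛ (by linarith)
    have hΛ0 : 0 ≤ Λ := by linarith
    obtain ⟨hτ0, hτδ⟩ := hτ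
    have h2 : Λ ^ 2 ≤ max L 1 ^ 2 := pow_le_pow_left₀ (by linarith) (le_max_of_le_left hΛL.le) 2
    calc M * Λ ^ (-ε) * Λ ^ 2 * τ ≤ M * 1 * max L 1 ^ 2 * (1 / (M * max L 1 ^ 2 + 1)) := by
          gcongr
      _ ≤ 1 := by rw [mul_one, mul_one_div, div_le_one (by positivity)]; linarith

lemma rpow_le_rpow_mul_sq {Λ p q : ℝ} (hΛ : 1 ≤ Λ) (h : p ≤ q + 2) : Λ ^ p ≤ Λ ^ q * Λ ^ 2 := by
  rw [← rpow_natCast, ← rpow_add (by linarith)]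
  exact rpow_le_rpow_of_exponent_le hΛ (by push_cast; exact h)

lemma lam_rpow_mul_sq_le {β a K y : ℝ} {n : ℕ} (hβ : 0 < β)
    (hy : 1 ≤ n → 0 ≤ y ∧ y ≤ K * lam n ^ (-a)) :
    lam n ^ β * y ^ 2 ≤ K ^ 2 * 2 ^ (2 * a - β) * lam (n + 1) ^ (β - 2 * a) := by
  have hRHS : 0 ≤ K ^ 2 * 2 ^ (2 * a - β) * lam (n + 1) ^ (β - 2 * a) := by
    have := lam_pos (n := n + 1) (by omega)
    positivity
  rcases Nat.eq_zero_or_pos n with rfl | hn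
  · rwa [lam_zero, zero_rpow hβ.ne', zero_mul]
  obtain ⟨hy0, hyK⟩ := hy hn
  have hΛ := lam_pos hn
  calc lam n ^ β * y ^ 2 ≤ lam n ^ β * (K * lam n ^ (-a)) ^ 2 := by gcongr
    _ = K ^ 2 * lam n ^ (β - 2 * a) := by
      rw [mul_pow, ← rpow_mul_natCast hΛ.le, mul_left_comm, ← rpow_add hΛ]
      ring_nf
    _ = K ^ 2 * 2 ^ (2 * a - β) * lam (n + 1) ^ (β - 2 * a) := by
      rw [lam_succ hn, mul_rpow zero_le_two hΛ.le, ← mul_assoc, mul_assoc (K ^ 2),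
        ← rpow_add zero_lt_two, show 2 * a - β + (β - 2 * a) = 0 by ring, rpow_zero, mul_one]

variable {β ν t₀ : ℝ} {X : ℕ → ℝ → ℝ}

theorem IsViscousSolution.le_gronwallBound (hX : IsViscousSolution β ν (Ici t₀) X)
    (hpos : ∀ n, 1 ≤ n → ∀ t ∈ Ici t₀, 0 ≤ X n t) (hβ : 0 < β) {n : ℕ} {a K s t : ℝ}
    (hs : t₀ ≤ s) (hst : s ≤ t) (hb : 1 ≤ n → ∀ u ∈ Icc s t, X n u ≤ K * lam n ^ (-a)) :
    X (n + 1) t ≤ gronwallBound (X (n + 1) s) (-(ν * lam (n + 1) ^ 2))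
      (K ^ 2 * 2 ^ (2 * a - β) * lam (n + 1) ^ (β - 2 * a)) (t - s) := by
  refine le_gronwallBound_of_hasDerivWithinAt (f' := fun u => -ν * lam (n + 1) ^ 2 * X (n + 1) u
    + lam n ^ β * X n u ^ 2 - lam (n + 1) ^ β * X (n + 1) u * X (n + 1 + 1) u) hst
    (fun u hu => ?_) le_rfl (fun u hu => ?_)
  · simpa using (hX (n + 1) (by omega) u (hs.trans hu.1)).mono (Ici_subset_Ici.2 hs)
  · have hu₀ : t₀ ≤ u := hs.trans hu.1
    have hsource : lam n ^ β * X n u ^ 2 ≤ K ^ 2 * 2 ^ (2 * a - β) * lam (n + 1) ^ (β - 2 * a) :=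
      lam_rpow_mul_sq_le hβ fun hn => ⟨hpos n hn u hu₀, hb hn u (Ico_subset_Icc_self hu)⟩
    have htransfer : 0 ≤ lam (n + 1) ^ β * X (n + 1) u * X (n + 1 + 1) u := by
      have := rpow_nonneg (lam_pos (n := n + 1) (by omega)).le β
      have := hpos (n + 1) (by omega) u hu₀
      have := hpos (n + 1 + 1) (by omega) u hu₀
      positivity
    linarith

def DecayBoundOn (a K : ℝ) (X : ℕ → ℝ → ℝ) (I : Set ℝ) : Prop :=
  ∀ n, 1 ≤ n → ∀ t ∈ I, X n t ≤ K * lam n ^ (-a)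

theorem IsViscousSolution.le_add_lam_rpow_neg (hX : IsViscousSolution β ν (Ici t₀) X)
    (hpos : ∀ n, 1 ≤ n → ∀ t ∈ Ici t₀, 0 ≤ X n t) (hβ : 0 < β) (hν : 0 < ν) {n : ℕ}
    {ε K s t : ℝ} (hs : t₀ ≤ s) (hst : s ≤ t)
    (hb : 1 ≤ n → ∀ u ∈ Icc s t, X n u ≤ K * lam n ^ (-(β - 2 + ε)))
    (hsmall : min (K ^ 2 * 2 ^ (β - 4 + 2 * ε) * lam (n + 1) ^ (-ε) * lam (n + 1) ^ 2 * (t - s))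
      (K ^ 2 * 2 ^ (β - 4 + 2 * ε) * lam (n + 1) ^ (-ε) / ν) ≤ 1) :
    X (n + 1) t ≤ X (n + 1) s + lam (n + 1) ^ (-(β - 2 + ε)) := by
  have hΛ : 1 ≤ lam (n + 1) := one_le_lam (by omega)
  set Λ := lam (n + 1)
  set a := β - 2 + ε
  set M := K ^ 2 * (2 : ℝ) ^ (β - 4 + 2 * ε)
  have hΛ0 : 0 < Λ := by linarith
  have hc : 0 < ν * Λ ^ 2 := by positivity
  have hτ : 0 ≤ t - s := by linarith
  have hXs := hpos (n + 1) (by omega) s hs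
  have hΛa := rpow_pos_of_pos hΛ0 (-a)
  have hsplit : M * Λ ^ (β - 2 * a) = Λ ^ (-a) * (M * Λ ^ (-ε) * Λ ^ 2) := by
    have : Λ ^ (β - 2 * a) = Λ ^ (-a) * Λ ^ (-ε) * Λ ^ 2 := by
      rw [← rpow_natCast, ← rpow_add hΛ0, ← rpow_add hΛ0]
      congr 1
      push_cast
      ring
    rw [this]
    ring
  have hgron := hX.le_gronwallBound hpos hβ hs hst hb
  rw [show 2 * a - β = β - 4 + 2 * ε by ring] at hgron
  rcases min_le_iff.1 hsmall with h | h
  · calc X (n + 1) t ≤ X (n + 1) s + M * Λ ^ (β - 2 * a) * (t - s) :=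
          hgron.trans (gronwallBound_neg_le_add_mul hc hXs (by positivity) hτ)
      _ = X (n + 1) s + Λ ^ (-a) * (M * Λ ^ (-ε) * Λ ^ 2 * (t - s)) := by rw [hsplit]; ring
      _ ≤ X (n + 1) s + Λ ^ (-a) := by nlinarith
  · calc X (n + 1) t ≤ X (n + 1) s * exp (-(ν * Λ ^ 2) * (t - s))
            + M * Λ ^ (β - 2 * a) / (ν * Λ ^ 2) :=
          hgron.trans (gronwallBound_neg_le_mul_exp_add_div hc (by positivity))
      _ = X (n + 1) s * exp (-(ν * Λ ^ 2) * (t - s)) + Λ ^ (-a) * (M * Λ ^ (-ε) / ν) := by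
          rw [hsplit]; field_simp
      _ ≤ X (n + 1) s * 1 + Λ ^ (-a) * 1 := by
          gcongr; exact exp_le_one_iff.2 (by nlinarith)
      _ = X (n + 1) s + Λ ^ (-a) := by ring

theorem IsViscousSolution.exists_decayBoundOn_Icc (hX : IsViscousSolution β ν (Ici t₀) X)
    (hpos : ∀ n, 1 ≤ n → ∀ t ∈ Ici t₀, 0 ≤ X n t) (hβ : 0 < β) (hν : 0 < ν) {ε C : ℝ}
    (hε : 0 < ε) (h₀ : ∀ n, 1 ≤ n → X n t₀ ≤ C * lam n ^ (-(β - 2 + ε))) :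
    ∃ δ > 0, DecayBoundOn (β - 2 + ε) (C + 1) X (Icc t₀ (t₀ + δ)) := by
  obtain ⟨δ, hδ, hsmall⟩ :=
    exists_pos_min_mul_rpow_neg_le_one (M := (C + 1) ^ 2 * 2 ^ (β - 4 + 2 * ε)) (ν := ν)
      (by positivity) hε
  have step (n : ℕ)
      (hn : 1 ≤ n → ∀ u ∈ Icc t₀ (t₀ + δ), X n u ≤ (C + 1) * lam n ^ (-(β - 2 + ε)))
      (t : ℝ) (ht : t ∈ Icc t₀ (t₀ + δ)) :
      X (n + 1) t ≤ (C + 1) * lam (n + 1) ^ (-(β - 2 + ε)) := by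
    have hgain := hX.le_add_lam_rpow_neg hpos hβ hν le_rfl ht.1
      (fun hn' u hu => hn hn' u ⟨hu.1, hu.2.trans ht.2⟩)
      (hsmall (t - t₀) ⟨by linarith [ht.1], by linarith [ht.2]⟩ _ (one_le_lam (by omega)))
    linarith [h₀ (n + 1) (by omega)]
  have hsucc (m : ℕ) : ∀ t ∈ Icc t₀ (t₀ + δ),
      X (m + 1) t ≤ (C + 1) * lam (m + 1) ^ (-(β - 2 + ε)) := by
    induction m with
    | zero => exact step 0 (by omega)
    | succ m ih => exact step (m + 1) fun _ => ih
  refine ⟨δ, hδ, fun n hn => ?_⟩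
  obtain ⟨m, rfl⟩ : ∃ m, n = m + 1 := ⟨n - 1, by omega⟩
  exact hsucc m

theorem DecayBoundOn.bootstrap (hX : IsViscousSolution β ν (Ici t₀) X)
    (hpos : ∀ n, 1 ≤ n → ∀ t ∈ Ici t₀, 0 ≤ X n t) (hβ : 0 < β) (hν : 0 < ν)
    {a ε K s T η : ℝ} (h : DecayBoundOn a K X (Icc s T)) (hs : t₀ ≤ s) (hη : 0 < η)
    (hε2 : ε ≤ 2) (hεa : ε ≤ a + 2 - β) :
    DecayBoundOn (a + ε) (K / (ν * η) + K ^ 2 * 2 ^ (2 * a - β) / ν) X (Icc (s + η) T) := by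
  intro n hn t ht
  obtain ⟨m, rfl⟩ : ∃ m, n = m + 1 := ⟨n - 1, by omega⟩
  have hΛ : 1 ≤ lam (m + 1) := one_le_lam hn
  set Λ := lam (m + 1)
  set M := K ^ 2 * (2 : ℝ) ^ (2 * a - β)
  have hΛ0 : 0 < Λ := by linarith
  have hc : 0 < ν * Λ ^ 2 := by positivity
  have hXs : X (m + 1) s ≤ K * Λ ^ (-a) := h (m + 1) hn s ⟨le_rfl, by linarith [ht.1, ht.2]⟩
  have hK : 0 ≤ K :=
    nonneg_of_mul_nonneg_left ((hpos (m + 1) hn s hs).trans hXs) (rpow_pos_of_pos hΛ0 _)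
  have hdamped : exp (-(ν * Λ ^ 2) * (t - s)) ≤ (ν * Λ ^ 2 * η)⁻¹ :=
    calc exp (-(ν * Λ ^ 2) * (t - s)) ≤ exp (-(ν * Λ ^ 2 * η)) := by
          gcongr; nlinarith [ht.1]
      _ ≤ (ν * Λ ^ 2 * η)⁻¹ := by
          rw [exp_neg]
          exact inv_anti₀ (by positivity) (by linarith [add_one_le_exp (ν * Λ ^ 2 * η)])
  have hdecay : X (m + 1) s * exp (-(ν * Λ ^ 2) * (t - s)) ≤ K / (ν * η) * Λ ^ (-(a + ε)) :=
    calc X (m + 1) s * exp (-(ν * Λ ^ 2) * (t - s)) ≤ K * (Λ ^ (-(a + ε)) * Λ ^ 2) *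
          (ν * Λ ^ 2 * η)⁻¹ := by
          have := hpos (m + 1) hn s hs
          gcongr
          exact hXs.trans (by gcongr; exact rpow_le_rpow_mul_sq hΛ (by linarith))
      _ = K / (ν * η) * Λ ^ (-(a + ε)) := by field_simp
  have hsource : M * Λ ^ (β - 2 * a) / (ν * Λ ^ 2) ≤ M / ν * Λ ^ (-(a + ε)) :=
    calc M * Λ ^ (β - 2 * a) / (ν * Λ ^ 2) ≤ M * (Λ ^ (-(a + ε)) * Λ ^ 2) / (ν * Λ ^ 2) := by
          gcongr; exact rpow_le_rpow_mul_sq hΛ (by linarith)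
      _ = M / ν * Λ ^ (-(a + ε)) := by field_simp
  calc X (m + 1) t ≤ gronwallBound (X (m + 1) s) (-(ν * Λ ^ 2)) (M * Λ ^ (β - 2 * a)) (t - s) :=
        hX.le_gronwallBound hpos hβ hs (by linarith [ht.1]) fun hm u hu =>
          h m hm u ⟨hu.1, hu.2.trans ht.2⟩
    _ ≤ X (m + 1) s * exp (-(ν * Λ ^ 2) * (t - s)) + M * Λ ^ (β - 2 * a) / (ν * Λ ^ 2) :=
        gronwallBound_neg_le_mul_exp_add_div hc (by positivity)
    _ ≤ (K / (ν * η) + M / ν) * Λ ^ (-(a + ε)) := by linarith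

theorem DecayBoundOn.iterate_bootstrap (hX : IsViscousSolution β ν (Ici t₀) X)
    (hpos : ∀ n, 1 ≤ n → ∀ t ∈ Ici t₀, 0 ≤ X n t) (hβ : 0 < β) (hν : 0 < ν)
    {a ε K s T η : ℝ} (h : DecayBoundOn a K X (Icc s T)) (hs : t₀ ≤ s) (hη : 0 < η)
    (hε : 0 ≤ ε) (hε2 : ε ≤ 2) (hεa : ε ≤ a + 2 - β) (k : ℕ) :
    ∃ K', DecayBoundOn (a + k * ε) K' X (Icc (s + k * η) T) := by
  induction k with
  | zero => exact ⟨K, by simpa using h⟩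
  | succ k ih =>
    obtain ⟨K', hK'⟩ := ih
    have hkε : 0 ≤ (k : ℝ) * ε := by positivity
    have hkη : 0 ≤ (k : ℝ) * η := by positivity
    simp only [Nat.cast_succ, add_one_mul, ← add_assoc]
    exact ⟨_, hK'.bootstrap hX hpos hβ hν (by linarith) hη hε2 (by linarith)⟩

theorem local_smoothness_general
    (β ν ε t₀ : ℝ) (hβ : 0 < β) (hν : 0 < ν) (hε : 0 < ε)
    (X : ℕ → ℝ → ℝ) (hX : IsViscousSolution β ν (Set.Ici t₀) X)
    (hpos : ∀ n, 1 ≤ n → ∀ t ∈ Set.Ici t₀, 0 ≤ X n t)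
    (hbd : ∃ C : ℝ, ∀ n, 1 ≤ n → lam n ^ (β - 2 + ε) * X n t₀ ≤ C) :
    ∃ t₀' : ℝ, t₀ < t₀' ∧
      ∀ γ : ℝ, 0 < γ → ∀ t : ℝ, t₀ < t → t ≤ t₀' →
        ∃ C : ℝ, ∀ n, 1 ≤ n → lam n ^ γ * X n t ≤ C := by
  obtain ⟨C, hC⟩ := hbd
  set ε' := min ε 2
  have hε' : 0 < ε' := lt_min hε two_pos
  have h₀ (n : ℕ) (hn : 1 ≤ n) : X n t₀ ≤ C * lam n ^ (-(β - 2 + ε')) :=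
    le_mul_lam_rpow_neg_of_le hn (hpos n hn t₀ self_mem_Ici)
      ((le_mul_lam_rpow_neg_iff hn).2 (hC n hn)) (by linarith [min_le_left ε 2])
  obtain ⟨δ, hδ, hshort⟩ := hX.exists_decayBoundOn_Icc hpos hβ hν hε' h₀
  refine ⟨t₀ + δ, by linarith, fun γ _ t ht ht' => ?_⟩
  obtain ⟨k, hk⟩ := exists_nat_ge ((γ - (β - 2 + ε')) / ε')
  have hη : 0 < (t - t₀) / (k + 1) := div_pos (by linarith) (by positivity)
  obtain ⟨K, hK⟩ := hshort.iterate_bootstrap hX hpos hβ hν le_rfl hη hε'.le (min_le_right ε 2)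
    (by linarith) (k + 1)
  have ht_eq : t₀ + ((k + 1 : ℕ) : ℝ) * ((t - t₀) / (k + 1)) = t := by
    push_cast; field_simp; ring
  have hγ : γ ≤ β - 2 + ε' + ((k + 1 : ℕ) : ℝ) * ε' := by
    rw [div_le_iff₀ hε'] at hk; push_cast; linarith
  refine ⟨K, fun n hn => (le_mul_lam_rpow_neg_iff hn).1 ?_⟩
  exact le_mul_lam_rpow_neg_of_le hn (hpos n hn t ht.le) (hK n hn t ⟨ht_eq.le, ht'⟩) hγ

/-- a nonnegative weak solution on `[t₀,∞)` whose data at time `t₀`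
are bounded in the `λ_n^{β-2+ε}` scaling is smooth on some interval `(t₀, t₀']`. -/
theorem local_smoothness
    (β ν ε t₀ : ℝ) (hβ : 0 < β) (hν : 0 < ν) (hε : 0 < ε) (ht₀ : 0 ≤ t₀)
    (X : ℕ → ℝ → ℝ) (hX : IsViscousSolution β ν (Set.Ici t₀) X)
    (hpos : ∀ n, 1 ≤ n → ∀ t ∈ Set.Ici t₀, 0 ≤ X n t)
    (hbd : ∃ C : ℝ, ∀ n, 1 ≤ n → lam n ^ (β - 2 + ε) * X n t₀ ≤ C) :
    ∃ t₀' : ℝ, t₀ < t₀' ∧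
      ∀ γ : ℝ, 0 < γ → ∀ t : ℝ, t₀ < t → t ≤ t₀' →
        ∃ C : ℝ, ∀ n, 1 ≤ n → lam n ^ γ * X n t ≤ C :=
  local_smoothness_general β ν ε t₀ hβ hν hε X hX hpos hbd
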